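/- arXiv:2404.13718 — 3 statements merged into one kernel-verified Lean document; each statement's English description precedes it below -/
import Mathlib

section
/- Let c_1,…,c_n and d_1,…,d_n be real numbers. Suppose a sequence (M_m)_{m≥0} of real numbers satisfies M_0 = 1 and M_m = Σ_{i=1}^n c_i Σ_{j=0}^{m-1} C(m-1, j) d_i^{m-1-j} M_j for all m ≥ 1. If A ≥ 1 satisfies |d_i|^p / p! ≤ A for all i and all p ≥ 0, and k = max{A·Σ_i |c_i|, 1}, then |M_m| ≤ k^m · m! for all m ≥ 0. -/
open Finset

/-- Each of the `l + 1` terms is at most `A * k ^ l * l !`, because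
`choose l j * (l - j)! * j! = l!`. -/
lemma abs_sum_choose_mul_pow_mul_le {d A k : ℝ} {M : ℕ → ℝ} {l : ℕ}
    (hd : ∀ p : ℕ, |d| ^ p / p.factorial ≤ A) (hk : 1 ≤ k)
    (hM : ∀ j ≤ l, |M j| ≤ k ^ j * j.factorial) :
    |∑ j ∈ range (l + 1), (l.choose j : ℝ) * d ^ (l - j) * M j|
      ≤ (l + 1) * (A * k ^ l * l.factorial) := by
  have hA : 0 ≤ A := le_trans (by simp) (hd 0)
  have hterm : ∀ j ∈ range (l + 1),
      |(l.choose j : ℝ) * d ^ (l - j) * M j| ≤ A * k ^ l * l.factorial := by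
    intro j hj
    have hjl : j ≤ l := Nat.lt_succ_iff.mp (mem_range.mp hj)
    have hdp : |d| ^ (l - j) ≤ A * (l - j).factorial :=
      (div_le_iff₀ (by positivity)).mp (hd (l - j))
    have hfact : (l.choose j : ℝ) * (l - j).factorial * j.factorial = l.factorial := by
      rw [← Nat.choose_mul_factorial_mul_factorial hjl]; push_cast; ring
    rw [abs_mul, abs_mul, abs_pow, Nat.abs_cast]
    calc (l.choose j : ℝ) * |d| ^ (l - j) * |M j|
        ≤ (l.choose j : ℝ) * (A * (l - j).factorial) * (k ^ j * j.factorial) := by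
          gcongr; exact hM j hjl
      _ = A * k ^ j * ((l.choose j : ℝ) * (l - j).factorial * j.factorial) := by ring
      _ ≤ A * k ^ l * l.factorial := by
          rw [hfact]; gcongr
  calc _ ≤ ∑ j ∈ range (l + 1), |(l.choose j : ℝ) * d ^ (l - j) * M j| := abs_sum_le_sum_abs _ _
    _ ≤ ∑ j ∈ range (l + 1), A * k ^ l * l.factorial := sum_le_sum hterm
    _ = (l + 1) * (A * k ^ l * l.factorial) := by simp

lemma abs_sum_mul_le_of_abs_le {ι : Type*} (s : Finset ι) (c x : ι → ℝ) {B : ℝ}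
    (hx : ∀ i ∈ s, |x i| ≤ B) : |∑ i ∈ s, c i * x i| ≤ (∑ i ∈ s, |c i|) * B := by
  calc _ ≤ ∑ i ∈ s, |c i * x i| := abs_sum_le_sum_abs _ _
    _ ≤ ∑ i ∈ s, |c i| * B := sum_le_sum fun i hi => by
          rw [abs_mul]; exact mul_le_mul_of_nonneg_left (hx i hi) (abs_nonneg _)
    _ = (∑ i ∈ s, |c i|) * B := (sum_mul _ _ _).symm

theorem moment_growth_estimate_general (n : ℕ) (c d : Fin n → ℝ) (M : ℕ → ℝ)
    (hM0 : M 0 = 1)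
    (hrec : ∀ m : ℕ, 1 ≤ m →
      M m = ∑ i, c i * ∑ j ∈ Finset.range m,
        (Nat.choose (m - 1) j : ℝ) * d i ^ (m - 1 - j) * M j)
    (A : ℝ)
    (hAd : ∀ i, ∀ p : ℕ, |d i| ^ p / Nat.factorial p ≤ A)
    (k : ℝ) (hk : k = max (A * ∑ i, |c i|) 1) :
    ∀ m : ℕ, |M m| ≤ k ^ m * Nat.factorial m := by
  have hk1 : 1 ≤ k := hk ▸ le_max_right _ _
  have hkc : A * ∑ i, |c i| ≤ k := hk ▸ le_max_left _ _
  intro m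
  induction m using Nat.strong_induction_on with
  | _ m ih =>
  cases m with
  | zero => simp [hM0]
  | succ l =>
    have hinner := fun i => abs_sum_choose_mul_pow_mul_le (hAd i) hk1
      fun j hj => ih j (Nat.lt_succ_of_le hj)
    rw [hrec (l + 1) l.succ_pos, Nat.add_sub_cancel]
    calc _ ≤ (∑ i, |c i|) * ((l + 1) * (A * k ^ l * l.factorial)) :=
          abs_sum_mul_le_of_abs_le _ _ _ fun i _ => hinner i
      _ = (A * ∑ i, |c i|) * k ^ l * (l + 1).factorial := by
          push_cast [Nat.factorial_succ]; ring
      _ ≤ k * k ^ l * (l + 1).factorial := by gcongr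
      _ = k ^ (l + 1) * (l + 1).factorial := by ring

theorem moment_growth_estimate (n : ℕ) (c d : Fin n → ℝ) (M : ℕ → ℝ)
    (hM0 : M 0 = 1)
    (hrec : ∀ m : ℕ, 1 ≤ m →
      M m = ∑ i, c i * ∑ j ∈ Finset.range m,
        (Nat.choose (m - 1) j : ℝ) * d i ^ (m - 1 - j) * M j)
    (A : ℝ) (hA : 1 ≤ A)
    (hAd : ∀ i, ∀ p : ℕ, |d i| ^ p / Nat.factorial p ≤ A)
    (k : ℝ) (hk : k = max (A * ∑ i, |c i|) 1) :
    ∀ m : ℕ, |M m| ≤ k ^ m * Nat.factorial m :=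
  moment_growth_estimate_general n c d M hM0 hrec A hAd k hk
end

section
/- Let X be an operator on a vector space of polynomials and suppose operators a^+, a^0, a^- act on monic orthogonal polynomials (f_n) by a^+ f_n = f_{n+1}, a^0 f_n = α_n f_n, a^- f_n = ω_n f_{n−1} (with f_{−1} = 0), where X = a^+ + a^0 + a^-. If U = a^- + (1/2)a^0 and V = a^+ + (1/2)a^0, then for all n ≥ 1, [U, X] f_n = (ω_{n+1} − ω_n) f_n + (1/2)ω_n(α_n − α_{n−1}) f_{n−1} + (1/2)(α_{n+1} − α_n) f_{n+1}. -/
/-!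
The commutator bracket is bilinear and kills `⁅a⁻, a⁻⁆` and `⁅a⁰, a⁰⁆`, so
`⁅U, X⁆ = ⁅a⁻, a⁺⁆ + ½ ⁅a⁻, a⁰⁆ + ½ ⁅a⁰, a⁺⁆`. Each of the three brackets maps `f n` to a
multiple of a single `f m` (with `m = n`, `n - 1`, `n + 1` respectively), read off from the
ladder action.
-/

theorem Ring.lie_add_smul_add {R A : Type*} [CommRing R] [Ring A] [Algebra R A]
    (c : R) (a b d : A) :
    ⁅a + c • b, d + b + a⁆ = ⁅a, d⁆ + (1 - c) • ⁅a, b⁆ + c • ⁅b, d⁆ := by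
  simp only [Ring.lie_def, mul_add, add_mul, smul_mul_assoc, mul_smul_comm]
  module

section Ladder

variable {R M : Type*} [CommRing R] [AddCommGroup M] [Module R M]
  {f : ℕ → M} {α ω : ℕ → R} {ap a0 am : Module.End R M}

theorem lie_diag_raise_apply (hap : ∀ n, ap (f n) = f (n + 1))
    (ha0 : ∀ n, a0 (f n) = α n • f n) (n : ℕ) :
    ⁅a0, ap⁆ (f n) = (α (n + 1) - α n) • f (n + 1) := by
  rw [Ring.lie_def, LinearMap.sub_apply, Module.End.mul_apply,
    Module.End.mul_apply, hap, ha0, ha0, map_smul, hap, sub_smul]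

theorem lie_lower_diag_apply (ha0 : ∀ n, a0 (f n) = α n • f n)
    (ham : ∀ n, am (f (n + 1)) = ω (n + 1) • f n) (n : ℕ) :
    ⁅am, a0⁆ (f (n + 1)) = (ω (n + 1) * (α (n + 1) - α n)) • f n := by
  rw [Ring.lie_def, LinearMap.sub_apply, Module.End.mul_apply,
    Module.End.mul_apply, ha0, ham, map_smul, ham, map_smul, ha0, smul_smul, smul_smul]
  module

theorem lie_lower_raise_apply (hap : ∀ n, ap (f n) = f (n + 1))
    (ham : ∀ n, am (f (n + 1)) = ω (n + 1) • f n) (n : ℕ) :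
    ⁅am, ap⁆ (f (n + 1)) = (ω (n + 2) - ω (n + 1)) • f (n + 1) := by
  rw [Ring.lie_def, LinearMap.sub_apply, Module.End.mul_apply,
    Module.End.mul_apply, hap, ham, ham, map_smul, hap, sub_smul]

end Ladder

theorem commutator_U_X_on_orthogonal_polynomials_general
    {W : Type*} [AddCommGroup W] [Module ℝ W]
    (f : ℕ → W)
    (α ω : ℕ → ℝ)
    (ap a0 am X U : W →ₗ[ℝ] W)
    (hap : ∀ n, ap (f n) = f (n + 1))
    (ha0 : ∀ n, a0 (f n) = α n • f n)
    (ham : ∀ n, am (f (n + 1)) = ω (n + 1) • f n)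
    (hX : X = ap + a0 + am)
    (hU : U = am + (1 / 2 : ℝ) • a0) :
    ∀ n : ℕ, 1 ≤ n →
      (U ∘ₗ X - X ∘ₗ U) (f n) =
        (ω (n + 1) - ω n) • f n +
        ((1 / 2) * ω n * (α n - α (n - 1))) • f (n - 1) +
        ((1 / 2) * (α (n + 1) - α n)) • f (n + 1) := by
  intro n hn
  obtain ⟨k, rfl⟩ := Nat.exists_eq_add_of_le' hn
  have hbracket : U ∘ₗ X - X ∘ₗ U = ⁅U, X⁆ := (Ring.lie_def U X).symm
  rw [hbracket, hX, hU, Ring.lie_add_smul_add, LinearMap.add_apply, LinearMap.add_apply,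
    LinearMap.smul_apply, LinearMap.smul_apply, lie_lower_raise_apply hap ham,
    lie_lower_diag_apply ha0 ham, lie_diag_raise_apply hap ha0, Nat.add_sub_cancel]
  module

theorem commutator_U_X_on_orthogonal_polynomials
    {W : Type*} [AddCommGroup W] [Module ℝ W]
    (f : ℕ → W) (hf : LinearIndependent ℝ f)
    (α ω : ℕ → ℝ)
    (ap a0 am X U V : W →ₗ[ℝ] W)
    (hap : ∀ n, ap (f n) = f (n + 1))
    (ha0 : ∀ n, a0 (f n) = α n • f n)
    (ham0 : am (f 0) = 0)
    (ham : ∀ n, am (f (n + 1)) = ω (n + 1) • f n)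
    (hX : X = ap + a0 + am)
    (hU : U = am + (1 / 2 : ℝ) • a0)
    (hV : V = ap + (1 / 2 : ℝ) • a0) :
    ∀ n : ℕ, 1 ≤ n →
      (U ∘ₗ X - X ∘ₗ U) (f n) =
        (ω (n + 1) - ω n) • f n +
        ((1 / 2) * ω n * (α n - α (n - 1))) • f (n - 1) +
        ((1 / 2) * (α (n + 1) - α n)) • f (n + 1) :=
  commutator_U_X_on_orthogonal_polynomials_general f α ω ap a0 am X U hap ha0 ham hX hU
end

section
/- With the setup of the quantum decomposition X = a^+ + a^0 + a^- acting on monic orthogonal polynomials f_n with Meixner Szegő–Jacobi parameters α_n = αn + α_0, ω_n = βn² + (t − β)n, and U = a^- + (1/2)a^0, N f_n = n f_n, one has [U, X] = (α/2)X − (Δ/2)N + (τ/2)I as operators on the span of the f_n, where Δ = α² − 4β and τ = 2t − αα_0. -/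
/-!
Expanding by bilinearity, `[U, X] = [a⁻, a⁺] + ½[a⁻, a⁰] + ½[a⁰, a⁺]`. Because `α_n` is
affine in `n`, both `[a⁻, a⁰]` and `[a⁰, a⁺]` are `α` times the ladder operator itself, and
`[a⁻, a⁺]` is diagonal with eigenvalues `ω_{n+1} - ω_n = 2βn + t`. Writing `a⁺ + a⁻ = X - a⁰` turns
`(α/2)(a⁺ + a⁻) + (2βn + t)` into the right-hand side.
-/

theorem commutator_lower_add_half_smul {A : Type*} [Ring A] [Algebra ℝ A] (ap a0 am : A) :
    (am + (1 / 2 : ℝ) • a0) * (ap + a0 + am) - (ap + a0 + am) * (am + (1 / 2 : ℝ) • a0) =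
      (am * ap - ap * am) + (1 / 2 : ℝ) • (am * a0 - a0 * am) +
        (1 / 2 : ℝ) • (a0 * ap - ap * a0) := by
  simp only [add_mul, mul_add, smul_mul_assoc, mul_smul_comm]
  module

section LadderOperators

variable {W : Type*} [AddCommGroup W] [Module ℝ W] {f : ℕ → W} {ap a0 am : Module.End ℝ W}

theorem commutator_lower_raise_apply {ω : ℕ → ℝ} (hap : ∀ n, ap (f n) = f (n + 1))
    (ham0 : am (f 0) = 0) (ham : ∀ n, am (f (n + 1)) = ω (n + 1) • f n) (hω0 : ω 0 = 0)
    (n : ℕ) :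
    (am * ap - ap * am) (f n) = (ω (n + 1) - ω n) • f n := by
  cases n with
  | zero => simp [hap, ham, ham0, hω0]
  | succ n => simp [hap, ham, sub_smul]

theorem commutator_diag_raise_apply {α α₀ : ℝ} (hap : ∀ n, ap (f n) = f (n + 1))
    (ha0 : ∀ n : ℕ, a0 (f n) = (α * n + α₀) • f n) (n : ℕ) :
    (a0 * ap - ap * a0) (f n) = α • ap (f n) := by
  simp only [LinearMap.sub_apply, Module.End.mul_apply, hap, ha0, map_smul]
  push_cast
  module

theorem commutator_lower_diag_apply {α α₀ : ℝ} {c : ℕ → ℝ}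
    (ha0 : ∀ n : ℕ, a0 (f n) = (α * n + α₀) • f n)
    (ham0 : am (f 0) = 0) (ham : ∀ n, am (f (n + 1)) = c n • f n) (n : ℕ) :
    (am * a0 - a0 * am) (f n) = α • am (f n) := by
  cases n with
  | zero => simp [ha0, ham0]
  | succ n =>
    simp only [LinearMap.sub_apply, Module.End.mul_apply, ham, ha0, map_smul]
    push_cast
    module

end LadderOperators

theorem commutator_U_X_meixner_general
    {W : Type*} [AddCommGroup W] [Module ℝ W]
    (f : ℕ → W)
    (α α₀ β t : ℝ)
    (ap a0 am X U N : W →ₗ[ℝ] W)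
    (hap : ∀ n, ap (f n) = f (n + 1))
    (ha0 : ∀ n : ℕ, a0 (f n) = (α * n + α₀) • f n)
    (ham0 : am (f 0) = 0)
    (ham : ∀ n : ℕ, am (f (n + 1)) =
      (β * ((n : ℝ) + 1) ^ 2 + (t - β) * ((n : ℝ) + 1)) • f n)
    (hN : ∀ n : ℕ, N (f n) = (n : ℝ) • f n)
    (hX : X = ap + a0 + am)
    (hU : U = am + (1 / 2 : ℝ) • a0)
    (Δ τ : ℝ) (hΔ : Δ = α ^ 2 - 4 * β) (hτ : τ = 2 * t - α * α₀) :
    ∀ n : ℕ,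
      (U ∘ₗ X - X ∘ₗ U) (f n) =
        (α / 2) • X (f n) - (Δ / 2) • N (f n) + (τ / 2) • f n := by
  intro n
  set ω : ℕ → ℝ := fun m ↦ β * (m : ℝ) ^ 2 + (t - β) * m
  have ham_ω : ∀ m, am (f (m + 1)) = ω (m + 1) • f m := fun m ↦ by simp [ω, ham]
  have hcomm : U ∘ₗ X - X ∘ₗ U = U * X - X * U := rfl
  rw [hcomm, hU, hX, commutator_lower_add_half_smul]
  simp only [LinearMap.add_apply, LinearMap.smul_apply,
    commutator_lower_raise_apply hap ham0 ham_ω (by simp [ω]),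
    commutator_lower_diag_apply ha0 ham0 ham, commutator_diag_raise_apply hap ha0,
    ha0, hN, hΔ, hτ, ω]
  push_cast
  module

theorem commutator_U_X_meixner
    {W : Type*} [AddCommGroup W] [Module ℝ W]
    (f : ℕ → W) (hf : LinearIndependent ℝ f)
    (α α₀ β t : ℝ)
    (ap a0 am X U N : W →ₗ[ℝ] W)
    (hap : ∀ n, ap (f n) = f (n + 1))
    (ha0 : ∀ n : ℕ, a0 (f n) = (α * n + α₀) • f n)
    (ham0 : am (f 0) = 0)
    (ham : ∀ n : ℕ, am (f (n + 1)) =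
      (β * ((n : ℝ) + 1) ^ 2 + (t - β) * ((n : ℝ) + 1)) • f n)
    (hN : ∀ n : ℕ, N (f n) = (n : ℝ) • f n)
    (hX : X = ap + a0 + am)
    (hU : U = am + (1 / 2 : ℝ) • a0)
    (Δ τ : ℝ) (hΔ : Δ = α ^ 2 - 4 * β) (hτ : τ = 2 * t - α * α₀) :
    ∀ n : ℕ,
      (U ∘ₗ X - X ∘ₗ U) (f n) =
        (α / 2) • X (f n) - (Δ / 2) • N (f n) + (τ / 2) • f n :=
  commutator_U_X_meixner_general f α α₀ β t ap a0 am X U N hap ha0 ham0 ham hN hX hU Δ τ hΔ hτ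
end
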